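/- Let k be a field, A an associative unital k-algebra that is smooth over k, n ≥ 1, and (A_V, π) a universal n-dimensional representation of A. Write Der_k(A_V) for the A_V-module of k-linear derivations A_V → A_V. Then there is a family of bijections Ψ_L, indexed by A_V-modules L, from the set of A-bimodule homomorphisms 𝔻er A → Mat_n(L) onto the set of A_V-linear maps Der_k(A_V) → L, natural in L: for every A_V-linear map h : L → L' and every A-bimodule homomorphism F : 𝔻er A → Mat_n(L), one has Ψ_{L'}(Mat_n(h) ∘ F) = h ∘ Ψ_L(F). This expresses the isomorphism (𝔻er A)_V ≅ Der(A_V): the Van den Bergh functor takes the bimodule of double derivations of A to the A_V-module of derivations of A_V. -/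

import Mathlib

/-!
STATEMENT 13: For a smooth `k`-algebra `A` with universal n-dimensional representation
`(A_V, π)`, there is a family of bijections, natural in the `A_V`-module `L`, between
`A`-bimodule homomorphisms `𝔻er A → Mat_n(L)` and `A_V`-linear maps `Der_k(A_V) → L`.
This expresses `(𝔻er A)_V ≅ Der(A_V)`.
-/

universe u

open TensorProduct

set_option synthInstance.maxHeartbeats 800000
set_option maxHeartbeats 1600000

section DoubleDerivations

variable (k : Type*) (A : Type*) [CommRing k] [Ring A] [Algebra k A]

/-- The `A`-bimodule `𝔻er A` of double derivations: `k`-linear maps `Θ : A → A ⊗ A`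
satisfying the Leibniz rule for the outer bimodule structure on `A ⊗ A`. -/
def DDer : Submodule k (A →ₗ[k] A ⊗[k] A) where
  carrier := {Θ | ∀ x y : A,
    Θ (x * y) = TensorProduct.map (LinearMap.mulLeft k x) LinearMap.id (Θ y)
      + TensorProduct.map LinearMap.id (LinearMap.mulRight k y) (Θ x)}
  add_mem' := by
    intro Θ₁ Θ₂ h1 h2 x y
    simp only [LinearMap.add_apply, h1 x y, h2 x y, map_add]
    abel
  zero_mem' := by intro x y; simp
  smul_mem' := by
    intro c Θ h x y
    simp only [LinearMap.smul_apply, h x y, map_smul, smul_add]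

variable {k A}

lemma commLL (a x : A) (u : A ⊗[k] A) :
    TensorProduct.map LinearMap.id (LinearMap.mulLeft k a)
        (TensorProduct.map (LinearMap.mulLeft k x) LinearMap.id u)
      = TensorProduct.map (LinearMap.mulLeft k x) LinearMap.id
        (TensorProduct.map LinearMap.id (LinearMap.mulLeft k a) u) := by
  induction u with
  | zero => simp
  | tmul p q => simp
  | add u v hu hv => simp [hu, hv]

lemma commLR (a y : A) (u : A ⊗[k] A) :
    TensorProduct.map LinearMap.id (LinearMap.mulLeft k a)
        (TensorProduct.map LinearMap.id (LinearMap.mulRight k y) u)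
      = TensorProduct.map LinearMap.id (LinearMap.mulRight k y)
        (TensorProduct.map LinearMap.id (LinearMap.mulLeft k a) u) := by
  induction u with
  | zero => simp
  | tmul p q => simp [mul_assoc]
  | add u v hu hv => simp [hu, hv]

lemma commRL (b x : A) (u : A ⊗[k] A) :
    TensorProduct.map (LinearMap.mulRight k b) LinearMap.id
        (TensorProduct.map (LinearMap.mulLeft k x) LinearMap.id u)
      = TensorProduct.map (LinearMap.mulLeft k x) LinearMap.id
        (TensorProduct.map (LinearMap.mulRight k b) LinearMap.id u) := by
  induction u with
  | zero => simp
  | tmul p q => simp [mul_assoc]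
  | add u v hu hv => simp [hu, hv]

lemma commRR (b y : A) (u : A ⊗[k] A) :
    TensorProduct.map (LinearMap.mulRight k b) LinearMap.id
        (TensorProduct.map LinearMap.id (LinearMap.mulRight k y) u)
      = TensorProduct.map LinearMap.id (LinearMap.mulRight k y)
        (TensorProduct.map (LinearMap.mulRight k b) LinearMap.id u) := by
  induction u with
  | zero => simp
  | tmul p q => simp
  | add u v hu hv => simp [hu, hv]

variable (k A)

/-- The left factor of the inner `A`-bimodule structure on `𝔻er A`:
`(a · Θ)(x) = Θ'(x) ⊗ a Θ''(x)`. -/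
noncomputable def innerDL (a : A) : DDer k A →ₗ[k] DDer k A :=
  (LinearMap.llcomp k A (A ⊗[k] A) (A ⊗[k] A)
      (TensorProduct.map LinearMap.id (LinearMap.mulLeft k a))).restrict
    (p := DDer k A) (q := DDer k A)
    (fun Θ hΘ => by
      intro x y
      simp only [LinearMap.llcomp_apply, LinearMap.coe_comp, Function.comp_apply,
        LinearMap.comp_apply]
      rw [hΘ x y, map_add, commLL, commLR])

/-- The right factor of the inner `A`-bimodule structure on `𝔻er A`:
`(Θ · b)(x) = Θ'(x) b ⊗ Θ''(x)`. -/
noncomputable def innerDR (b : A) : DDer k A →ₗ[k] DDer k A :=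
  (LinearMap.llcomp k A (A ⊗[k] A) (A ⊗[k] A)
      (TensorProduct.map (LinearMap.mulRight k b) LinearMap.id)).restrict
    (p := DDer k A) (q := DDer k A)
    (fun Θ hΘ => by
      intro x y
      simp only [LinearMap.llcomp_apply, LinearMap.coe_comp, Function.comp_apply,
        LinearMap.comp_apply]
      rw [hΘ x y, map_add, commRL, commRR])

/-- The enveloping algebra `A^e = A ⊗ₖ Aᵐᵒᵖ` acts on `A` by `(a ⊗ bᵒᵖ) · x = a x b`.
Under `x ⊗ y ↦ x ⊗ yᵒᵖ`, this is the outer bimodule structure of the text. -/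
noncomputable instance envModule : Module (A ⊗[k] Aᵐᵒᵖ) A :=
  TensorProduct.Algebra.module

/-- The multiplication map `A^e → A`, `a ⊗ bᵒᵖ ↦ a b`, as a map of `A^e`-modules; its
kernel is the `A^e`-module `Ω¹_nc A` of noncommutative 1-forms. -/
noncomputable def envMul : (A ⊗[k] Aᵐᵒᵖ) →ₗ[A ⊗[k] Aᵐᵒᵖ] A :=
  LinearMap.toSpanSingleton (A ⊗[k] Aᵐᵒᵖ) A (1 : A)

end DoubleDerivations

section VdB

variable (k : Type u) [Field k]

/-- Left action of a matrix over `C` on a matrix with entries in a `C`-module: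
`(P · X)_{ij} = Σ_l P_{il} • X_{lj}`. -/
def matLSmul {C N : Type*} [CommRing C] [AddCommGroup N] [Module C N] {n : ℕ}
    (P : Matrix (Fin n) (Fin n) C) (X : Matrix (Fin n) (Fin n) N) :
    Matrix (Fin n) (Fin n) N :=
  Matrix.of fun i j => ∑ l : Fin n, P i l • X l j

/-- Right action of a matrix over `C` on a matrix with entries in a `C`-module:
`(X · P)_{ij} = Σ_l P_{lj} • X_{il}`. -/
def matRSmul {C N : Type*} [CommRing C] [AddCommGroup N] [Module C N] {n : ℕ}
    (X : Matrix (Fin n) (Fin n) N) (P : Matrix (Fin n) (Fin n) C) :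
    Matrix (Fin n) (Fin n) N :=
  Matrix.of fun i j => ∑ l : Fin n, P l j • X i l

lemma map_matLSmul {C L L' : Type*} [CommRing C] [AddCommGroup L] [Module C L]
    [AddCommGroup L'] [Module C L'] (h : L →ₗ[C] L') {n : ℕ}
    (P : Matrix (Fin n) (Fin n) C) (X : Matrix (Fin n) (Fin n) L) :
    (matLSmul P X).map ⇑h = matLSmul P (X.map ⇑h) := by
  ext i j
  simp [matLSmul, Matrix.map_apply, map_sum]

lemma map_matRSmul {C L L' : Type*} [CommRing C] [AddCommGroup L] [Module C L]
    [AddCommGroup L'] [Module C L'] (h : L →ₗ[C] L') {n : ℕ}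
    (P : Matrix (Fin n) (Fin n) C) (X : Matrix (Fin n) (Fin n) L) :
    (matRSmul X P).map ⇑h = matRSmul (X.map ⇑h) P := by
  ext i j
  simp [matRSmul, Matrix.map_apply, map_sum]

/-- A bundled module over the commutative `k`-algebra `C`. -/
structure ModPkg (C : Type u) [CommRing C] [Algebra k C] : Type (u + 1) where
  carrier : Type u
  [acgInst : AddCommGroup carrier]
  [modkInst : Module k carrier]
  [modCInst : Module C carrier]
  [towerInst : IsScalarTower k C carrier]

attribute [instance] ModPkg.acgInst ModPkg.modkInst ModPkg.modCInst ModPkg.towerInst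

variable {k}
variable {A : Type u} [Ring A] [Algebra k A] {n : ℕ}
variable {AV : Type u} [CommRing AV] [Algebra k AV]

/-- `F : 𝔻er A → Mat_n(L)` is an `A`-bimodule homomorphism, where `Mat_n(L)` carries the
`A`-bimodule structure `a · X · b = π(a) X π(b)` induced by `π`. -/
def IsVdBHom (π : A →ₐ[k] Matrix (Fin n) (Fin n) AV) (L : ModPkg k AV)
    (F : DDer k A →ₗ[k] Matrix (Fin n) (Fin n) L.carrier) : Prop :=
  (∀ (a : A) (Θ : DDer k A), F (innerDL k A a Θ) = matLSmul (π a) (F Θ)) ∧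
  (∀ (b : A) (Θ : DDer k A), F (innerDR k A b Θ) = matRSmul (F Θ) (π b))

/-- Post-composition with `Mat_n(h)`, for `h : L → L'` an `A_V`-linear map, sends
`A`-bimodule homomorphisms `𝔻er A → Mat_n(L)` to `A`-bimodule homomorphisms
`𝔻er A → Mat_n(L')`. -/
noncomputable def pushVdB (π : A →ₐ[k] Matrix (Fin n) (Fin n) AV) {L L' : ModPkg k AV}
    (h : L.carrier →ₗ[AV] L'.carrier)
    (F : {F : DDer k A →ₗ[k] Matrix (Fin n) (Fin n) L.carrier // IsVdBHom π L F}) :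
    {F' : DDer k A →ₗ[k] Matrix (Fin n) (Fin n) L'.carrier // IsVdBHom π L' F'} :=
  ⟨((h.restrictScalars k).mapMatrix).comp F.1, by
    constructor
    · intro a Θ
      simp only [LinearMap.comp_apply, LinearMap.mapMatrix_apply,
        LinearMap.coe_restrictScalars]
      rw [F.2.1 a Θ, map_matLSmul]
    · intro b Θ
      simp only [LinearMap.comp_apply, LinearMap.mapMatrix_apply,
        LinearMap.coe_restrictScalars]
      rw [F.2.2 b Θ, map_matRSmul]⟩

end VdB


/-!
For `Θ ∈ 𝔻er A` and indices `p, q`, the map `a ↦ (π(Θ'(a))_{iq} π(Θ''(a))_{pj})_{ij}` is a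
`π`-derivation `A → Mat_n(A_V)`. The universal property over the dual numbers `A_V[ε]` turns
it into a derivation `D_Θ^{pq}` of `A_V`, and `g ↦ (Θ ↦ (g(D_Θ^{pq}))_{pq})` sends
`A_V`-linear maps `Der_k(A_V) → L` to bimodule maps `𝔻er A → Mat_n(L)`.

Smoothness makes `Ω¹_nc A` finitely generated projective over `A^e`, so it has a finite dual
basis `(ω_s, f_s)`. The `f_s` give double derivations `Θ_s = τ⁻¹ ∘ f_s ∘ d`. Two expansions
then give the inverse `F ↦ (D ↦ ∑ (D(ω_s))_{qp} F(Θ_s)_{pq})`: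
every derivation is `D = ∑ (D(ω_s))_{qp} D_{Θ_s}^{pq}`, and
every double derivation is `Θ = ∑_s Θ_s · h_Θ(ω_s)` for the inner action, where
`h_Θ : Ω¹_nc A → A^e` is the `A^e`-linear map corresponding to `Θ`.
-/

open MulOpposite

lemma Module.Projective.exists_dual_basis (R M : Type*) [Ring R] [AddCommGroup M] [Module R M]
    [Module.Finite R M] [Module.Projective R M] :
    ∃ (m : ℕ) (ω : Fin m → M) (f : Fin m → M →ₗ[R] R), ∀ x, ∑ s, f s x • ω s = x := by
  obtain ⟨m, p, i, -, -, hpi⟩ := Module.Finite.exists_comp_eq_id_of_projective R M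
  refine ⟨m, fun s => p (Pi.single s 1), fun s => LinearMap.proj s ∘ₗ i, fun x => ?_⟩
  have hx : p (i x) = x := LinearMap.congr_fun hpi x
  conv_rhs => rw [← hx, ← (Pi.basisFun R (Fin m)).sum_repr (i x)]
  simp

section Enveloping

variable (k A : Type*) [CommRing k] [Ring A] [Algebra k A]

/-- The identification `τ` of the outer bimodule `A ⊗ A` with `A^e`. -/
noncomputable def tensorOpEquiv : (A ⊗[k] A) ≃ₗ[k] (A ⊗[k] Aᵐᵒᵖ) :=
  TensorProduct.congr (LinearEquiv.refl k A) (opLinearEquiv k)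

@[simp] lemma tensorOpEquiv_tmul (u v : A) : tensorOpEquiv k A (u ⊗ₜ v) = u ⊗ₜ op v := rfl

/-- The universal derivation `d : A → Ω¹_nc A ⊆ A^e`. -/
noncomputable def envDiff : A →ₗ[k] A ⊗[k] Aᵐᵒᵖ :=
  (TensorProduct.mk k A Aᵐᵒᵖ).flip (op 1) -
    TensorProduct.mk k A Aᵐᵒᵖ 1 ∘ₗ (opLinearEquiv k).toLinearMap

variable {k A}

lemma envDiff_apply (a : A) : envDiff k A a = a ⊗ₜ op 1 - 1 ⊗ₜ op a := rfl

lemma envMul_tmul (a b : A) : envMul k A (a ⊗ₜ op b) = a * b := by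
  change a • op b • (1 : A) = a * b
  simp [MulOpposite.smul_eq_mul_unop]

lemma envDiff_mem_ker (a : A) : envDiff k A a ∈ LinearMap.ker (envMul k A) := by
  rw [LinearMap.mem_ker, envDiff_apply, map_sub, envMul_tmul, envMul_tmul, one_mul, mul_one,
    sub_self]

lemma envDiff_mul (x y : A) :
    envDiff k A (x * y) = (x ⊗ₜ op 1) * envDiff k A y + (1 ⊗ₜ op y) * envDiff k A x := by
  simp only [envDiff_apply, mul_sub, Algebra.TensorProduct.tmul_mul_tmul, mul_one, one_mul,
    op_one, ← op_mul]
  abel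

lemma sub_one_tmul_envMul_mem_span (ρ : A ⊗[k] Aᵐᵒᵖ) :
    ρ - 1 ⊗ₜ op (envMul k A ρ) ∈ Submodule.span (A ⊗[k] Aᵐᵒᵖ) (Set.range (envDiff k A)) := by
  induction ρ using TensorProduct.induction_on with
  | zero => simp
  | tmul u v =>
    have h : u ⊗ₜ[k] v - 1 ⊗ₜ op (envMul k A (u ⊗ₜ v)) = (1 ⊗ₜ v) * envDiff k A u := by
      rw [← op_unop v, envMul_tmul, envDiff_apply, mul_sub]
      simp [Algebra.TensorProduct.tmul_mul_tmul]
    rw [h]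
    exact Submodule.smul_mem _ _ (Submodule.subset_span ⟨u, rfl⟩)
  | add ρ₁ ρ₂ h₁ h₂ =>
    convert Submodule.add_mem _ h₁ h₂ using 1
    rw [map_add, op_add, TensorProduct.tmul_add]
    abel

lemma ker_envMul_le_span_envDiff :
    LinearMap.ker (envMul k A) ≤ Submodule.span (A ⊗[k] Aᵐᵒᵖ) (Set.range (envDiff k A)) := by
  intro ω hω
  simpa [LinearMap.mem_ker.mp hω] using sub_one_tmul_envMul_mem_span ω

lemma envDiff_mem_span_image {s : Set A} (hs : Algebra.adjoin k s = ⊤) (a : A) :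
    envDiff k A a ∈ Submodule.span (A ⊗[k] Aᵐᵒᵖ) (envDiff k A '' s) := by
  have ha : a ∈ Algebra.adjoin k s := hs ▸ Algebra.mem_top
  induction ha using Algebra.adjoin_induction with
  | mem x hx => exact Submodule.subset_span ⟨x, hx, rfl⟩
  | algebraMap c =>
    convert Submodule.zero_mem _
    rw [envDiff_apply, Algebra.algebraMap_eq_smul_one, op_smul, TensorProduct.tmul_smul,
      TensorProduct.smul_tmul', sub_self]
  | add x y _ _ hx hy => rw [map_add]; exact Submodule.add_mem _ hx hy
  | mul x y _ _ hx hy =>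
    rw [envDiff_mul]
    exact Submodule.add_mem _ (Submodule.smul_mem _ _ hy) (Submodule.smul_mem _ _ hx)

instance finite_ker_envMul [Algebra.FiniteType k A] :
    Module.Finite (A ⊗[k] Aᵐᵒᵖ) (LinearMap.ker (envMul k A)) := by
  obtain ⟨s, hs⟩ := Algebra.FiniteType.out (R := k) (A := A)
  rw [Module.Finite.iff_fg, Submodule.fg_def]
  refine ⟨envDiff k A '' s, s.finite_toSet.image _, le_antisymm ?_ ?_⟩
  · exact Submodule.span_le.mpr (Set.image_subset_iff.mpr fun a _ => envDiff_mem_ker a)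
  · refine (ker_envMul_le_span_envDiff).trans (Submodule.span_le.mpr ?_)
    rintro _ ⟨a, rfl⟩
    exact envDiff_mem_span_image hs a

lemma map_mul_eq_of_mem_ker_envMul {M : Type*} [AddCommGroup M] [Module k M]
    (act : A ⊗[k] Aᵐᵒᵖ →ₐ[k] Module.End k M) (ψ : A ⊗[k] Aᵐᵒᵖ →ₗ[k] M)
    (hψ : ∀ (a c : A) (e : Aᵐᵒᵖ),
      ψ ((c ⊗ₜ e) * envDiff k A a) = act (c ⊗ₜ e) (ψ (envDiff k A a)))
    {ω : A ⊗[k] Aᵐᵒᵖ} (hω : ω ∈ LinearMap.ker (envMul k A)) (r : A ⊗[k] Aᵐᵒᵖ) :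
    ψ (r * ω) = act r (ψ ω) := by
  let S : Submodule (A ⊗[k] Aᵐᵒᵖ) (A ⊗[k] Aᵐᵒᵖ) :=
    { carrier := {ρ | ∀ r, ψ (r * ρ) = act r (ψ ρ)}
      add_mem' := fun h₁ h₂ r => by simp [mul_add, h₁ r, h₂ r]
      zero_mem' := fun r => by simp
      smul_mem' := fun r' ρ hρ r => by
        rw [smul_eq_mul, ← mul_assoc, hρ, map_mul, Module.End.mul_apply, hρ] }
  have hgen : ∀ a, envDiff k A a ∈ S := fun a r => by
    induction r with
    | zero => simp
    | tmul c e => exact hψ a c e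
    | add r₁ r₂ h₁ h₂ => simp [add_mul, h₁, h₂]
  have hωS : ω ∈ S := by
    refine (ker_envMul_le_span_envDiff.trans (Submodule.span_le.mpr ?_)) hω
    rintro _ ⟨a, rfl⟩
    exact hgen a
  exact hωS r

lemma tensorOpEquiv_map_mulLeft (x : A) (u : A ⊗[k] A) :
    tensorOpEquiv k A (TensorProduct.map (LinearMap.mulLeft k x) LinearMap.id u)
      = (x ⊗ₜ op 1) * tensorOpEquiv k A u := by
  induction u with
  | zero => simp
  | tmul p q => simp [Algebra.TensorProduct.tmul_mul_tmul]
  | add u v hu hv => simp [hu, hv, mul_add]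

lemma tensorOpEquiv_map_mulRight (y : A) (u : A ⊗[k] A) :
    tensorOpEquiv k A (TensorProduct.map LinearMap.id (LinearMap.mulRight k y) u)
      = (1 ⊗ₜ op y) * tensorOpEquiv k A u := by
  induction u with
  | zero => simp
  | tmul p q => simp [Algebra.TensorProduct.tmul_mul_tmul]
  | add u v hu hv => simp [hu, hv, mul_add]

lemma tensorOpEquiv_map_mulRight_mulLeft (c e : A) (u : A ⊗[k] A) :
    tensorOpEquiv k A
        (TensorProduct.map (LinearMap.mulRight k c) (LinearMap.mulLeft k e) u)
      = tensorOpEquiv k A u * (c ⊗ₜ op e) := by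
  induction u with
  | zero => simp
  | tmul p q => simp [Algebra.TensorProduct.tmul_mul_tmul]
  | add u v hu hv => simp [hu, hv, add_mul]

end Enveloping

section DoubleDerivations

variable {k A : Type*} [CommRing k] [Ring A] [Algebra k A]

lemma mem_DDer_iff_tensorOpEquiv {Θ : A →ₗ[k] A ⊗[k] A} :
    Θ ∈ DDer k A ↔ ∀ x y : A, tensorOpEquiv k A (Θ (x * y))
      = (x ⊗ₜ op 1) * tensorOpEquiv k A (Θ y) + (1 ⊗ₜ op y) * tensorOpEquiv k A (Θ x) := by
  refine forall₂_congr fun x y => ?_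
  rw [← (tensorOpEquiv k A).injective.eq_iff, map_add, tensorOpEquiv_map_mulLeft,
    tensorOpEquiv_map_mulRight]

lemma DDer.map_one {Θ : A →ₗ[k] A ⊗[k] A} (hΘ : Θ ∈ DDer k A) : Θ 1 = 0 := by
  have h := mem_DDer_iff_tensorOpEquiv.mp hΘ 1 1
  rw [mul_one, op_one, Algebra.TensorProduct.one_def.symm, one_mul, left_eq_add] at h
  exact (tensorOpEquiv k A).map_eq_zero_iff.mp h

variable (k A) in
noncomputable def envDiffKer : A →ₗ[k] LinearMap.ker (envMul k A) :=
  (envDiff k A).codRestrict ((LinearMap.ker (envMul k A)).restrictScalars k) envDiff_mem_ker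

@[simp] lemma coe_envDiffKer (a : A) : (envDiffKer k A a : A ⊗[k] Aᵐᵒᵖ) = envDiff k A a := rfl

lemma envDiff_eq_sum_of_dual_basis {m : ℕ} {ω : Fin m → LinearMap.ker (envMul k A)}
    {f : Fin m → LinearMap.ker (envMul k A) →ₗ[A ⊗[k] Aᵐᵒᵖ] A ⊗[k] Aᵐᵒᵖ}
    (hdual : ∀ x, ∑ s, f s x • ω s = x) (a : A) :
    envDiff k A a = ∑ s, f s (envDiffKer k A a) * (ω s : A ⊗[k] Aᵐᵒᵖ) := by
  simpa using congrArg Subtype.val (hdual (envDiffKer k A a)).symm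

noncomputable def DDer.ofDual
    (f : LinearMap.ker (envMul k A) →ₗ[A ⊗[k] Aᵐᵒᵖ] A ⊗[k] Aᵐᵒᵖ) : DDer k A :=
  ⟨(tensorOpEquiv k A).symm.toLinearMap ∘ₗ f.restrictScalars k ∘ₗ envDiffKer k A, by
    refine mem_DDer_iff_tensorOpEquiv.mpr fun x y => ?_
    have hd : envDiffKer k A (x * y)
        = (x ⊗ₜ[k] op 1 : A ⊗[k] Aᵐᵒᵖ) • envDiffKer k A y
          + (1 ⊗ₜ[k] op y : A ⊗[k] Aᵐᵒᵖ) • envDiffKer k A x :=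
      Subtype.ext (envDiff_mul x y)
    simp [hd]⟩

lemma tensorOpEquiv_ofDual_apply
    (f : LinearMap.ker (envMul k A) →ₗ[A ⊗[k] Aᵐᵒᵖ] A ⊗[k] Aᵐᵒᵖ) (a : A) :
    tensorOpEquiv k A ((DDer.ofDual f : A →ₗ[k] A ⊗[k] A) a) = f (envDiffKer k A a) := by
  simp [DDer.ofDual]

/-- Restricted to `Ω¹_nc A`, this is the `A^e`-linear map `h_Θ` corresponding to `Θ`. -/
noncomputable def DDer.toEnv (Θ : A →ₗ[k] A ⊗[k] A) : A ⊗[k] Aᵐᵒᵖ →ₗ[k] A ⊗[k] Aᵐᵒᵖ :=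
  TensorProduct.lift (LinearMap.mk₂ k (fun u v => (1 ⊗ₜ[k] v) * tensorOpEquiv k A (Θ u))
    (fun u₁ u₂ v => by simp [mul_add])
    (fun c u v => by simp [mul_smul_comm])
    (fun u v₁ v₂ => by simp [TensorProduct.tmul_add, add_mul])
    (fun c u v => by simp [TensorProduct.tmul_smul, smul_mul_assoc]))

lemma DDer.toEnv_tmul (Θ : A →ₗ[k] A ⊗[k] A) (u : A) (v : Aᵐᵒᵖ) :
    DDer.toEnv Θ (u ⊗ₜ v) = (1 ⊗ₜ v) * tensorOpEquiv k A (Θ u) := rfl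

lemma DDer.toEnv_envDiff {Θ : A →ₗ[k] A ⊗[k] A} (hΘ : Θ ∈ DDer k A) (a : A) :
    DDer.toEnv Θ (envDiff k A a) = tensorOpEquiv k A (Θ a) := by
  rw [envDiff_apply, map_sub, DDer.toEnv_tmul, DDer.toEnv_tmul, DDer.map_one hΘ, map_zero,
    mul_zero, sub_zero, op_one, ← Algebra.TensorProduct.one_def, one_mul]

lemma DDer.toEnv_mul {Θ : A →ₗ[k] A ⊗[k] A} (hΘ : Θ ∈ DDer k A) (r : A ⊗[k] Aᵐᵒᵖ)
    {ω : A ⊗[k] Aᵐᵒᵖ} (hω : ω ∈ LinearMap.ker (envMul k A)) :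
    DDer.toEnv Θ (r * ω) = r * DDer.toEnv Θ ω := by
  refine map_mul_eq_of_mem_ker_envMul (Algebra.lmul k _) _ (fun a c e => ?_) hω r
  rw [Algebra.coe_lmul_eq_mul, LinearMap.mul_apply', DDer.toEnv_envDiff hΘ, envDiff_apply,
    mul_sub, map_sub]
  simp [Algebra.TensorProduct.tmul_mul_tmul, DDer.toEnv_tmul, mem_DDer_iff_tensorOpEquiv.mp hΘ,
    mul_add, ← mul_assoc]

end DoubleDerivations

section InnerAction

variable {k A : Type*} [CommRing k] [Ring A] [Algebra k A]

/-- The inner bimodule structure of `𝔻er A`, as a right `A^e`-action. -/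
noncomputable def DDer.innerAct (Θ : DDer k A) : A ⊗[k] Aᵐᵒᵖ →ₗ[k] DDer k A where
  toFun r := ⟨(tensorOpEquiv k A).symm.toLinearMap ∘ₗ LinearMap.mulRight k r ∘ₗ
      (tensorOpEquiv k A).toLinearMap ∘ₗ (Θ : A →ₗ[k] A ⊗[k] A), by
    refine mem_DDer_iff_tensorOpEquiv.mpr fun x y => ?_
    simp [mem_DDer_iff_tensorOpEquiv.mp Θ.2 x y, add_mul, mul_assoc]⟩
  map_add' r₁ r₂ := Subtype.ext <| LinearMap.ext fun a => by simp [mul_add]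
  map_smul' c r := Subtype.ext <| LinearMap.ext fun a => by simp [mul_smul_comm]

lemma DDer.tensorOpEquiv_innerAct_apply (Θ : DDer k A) (r : A ⊗[k] Aᵐᵒᵖ) (a : A) :
    tensorOpEquiv k A ((DDer.innerAct Θ r : A →ₗ[k] A ⊗[k] A) a)
      = tensorOpEquiv k A ((Θ : A →ₗ[k] A ⊗[k] A) a) * r := by
  simp [DDer.innerAct]

lemma DDer.innerAct_tmul (Θ : DDer k A) (c e : A) :
    DDer.innerAct Θ (c ⊗ₜ op e) = innerDL k A e (innerDR k A c Θ) := by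
  refine Subtype.ext <| LinearMap.ext fun a => (tensorOpEquiv k A).injective ?_
  rw [DDer.tensorOpEquiv_innerAct_apply, ← tensorOpEquiv_map_mulRight_mulLeft]
  change _ = tensorOpEquiv k A (TensorProduct.map LinearMap.id (LinearMap.mulLeft k e)
    (TensorProduct.map (LinearMap.mulRight k c) LinearMap.id ((Θ : A →ₗ[k] A ⊗[k] A) a)))
  rw [TensorProduct.map_map, LinearMap.id_comp, LinearMap.comp_id]

lemma DDer.eq_sum_innerAct {m : ℕ} {ω : Fin m → LinearMap.ker (envMul k A)}
    {f : Fin m → LinearMap.ker (envMul k A) →ₗ[A ⊗[k] Aᵐᵒᵖ] A ⊗[k] Aᵐᵒᵖ}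
    (hdual : ∀ x, ∑ s, f s x • ω s = x) (Θ : DDer k A) :
    Θ = ∑ s, DDer.innerAct (DDer.ofDual (f s)) (DDer.toEnv (Θ : A →ₗ[k] A ⊗[k] A) (ω s)) := by
  refine Subtype.ext <| LinearMap.ext fun a => (tensorOpEquiv k A).injective ?_
  rw [← DDer.toEnv_envDiff Θ.2, envDiff_eq_sum_of_dual_basis hdual, Submodule.coe_sum,
    LinearMap.sum_apply, map_sum, map_sum]
  refine Finset.sum_congr rfl fun s _ => ?_
  rw [DDer.toEnv_mul Θ.2 _ (ω s).2, DDer.tensorOpEquiv_innerAct_apply,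
    tensorOpEquiv_ofDual_apply]

lemma innerDR_one (Θ : DDer k A) : innerDR k A 1 Θ = Θ := by
  refine Subtype.ext <| LinearMap.ext fun x => ?_
  change TensorProduct.map (LinearMap.mulRight k 1) LinearMap.id _ = _
  rw [LinearMap.mulRight_one, TensorProduct.map_id, LinearMap.id_apply]
  rfl

lemma innerDL_one (Θ : DDer k A) : innerDL k A 1 Θ = Θ := by
  refine Subtype.ext <| LinearMap.ext fun x => ?_
  change TensorProduct.map LinearMap.id (LinearMap.mulLeft k 1) _ = _
  rw [LinearMap.mulLeft_one, TensorProduct.map_id, LinearMap.id_apply]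
  rfl

end InnerAction

section Matrices

variable {k A C : Type*} [CommRing k] [Ring A] [Algebra k A] [CommRing C] [Algebra k C] {n : ℕ}

lemma Derivation.map_matrix_mul (D : Derivation k C C) (P Q : Matrix (Fin n) (Fin n) C) :
    (P * Q).map D = P * Q.map D + P.map D * Q := by
  ext i j
  simp only [Matrix.map_apply, Matrix.mul_apply, Matrix.add_apply, map_sum,
    ← Finset.sum_add_distrib, Derivation.leibniz, smul_eq_mul]
  exact Finset.sum_congr rfl fun l _ => by ring

lemma Derivation.map_matrix_one (D : Derivation k C C) :
    (1 : Matrix (Fin n) (Fin n) C).map D = 0 := by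
  ext i j
  by_cases h : i = j <;> simp [h]

lemma Derivation.finset_sum_apply {ι : Type*} (s : Finset ι) (D : ι → Derivation k C C) (x : C) :
    (∑ i ∈ s, D i) x = ∑ i ∈ s, D i x := by
  rw [← Derivation.coeFnAddMonoidHom_apply, map_sum, Finset.sum_apply]
  rfl

variable (π : A →ₐ[k] Matrix (Fin n) (Fin n) C)

noncomputable def sandwich : A ⊗[k] Aᵐᵒᵖ →ₐ[k] Module.End k (Matrix (Fin n) (Fin n) C) :=
  Algebra.TensorProduct.lift ((Algebra.lmul k _).comp π)
    ((Algebra.lsmul k k (Matrix (Fin n) (Fin n) C)).comp (AlgHom.op π))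
    fun a b => show Commute _ _ from LinearMap.ext fun X => by simp [mul_assoc]

lemma sandwich_tmul (a : A) (b : Aᵐᵒᵖ) (X : Matrix (Fin n) (Fin n) C) :
    sandwich π (a ⊗ₜ b) X = π a * X * π (unop b) := by
  rw [sandwich, Algebra.TensorProduct.lift_tmul, Module.End.mul_apply]
  simp [mul_assoc]

lemma sandwich_smul (r : A ⊗[k] Aᵐᵒᵖ) (c : C) (X : Matrix (Fin n) (Fin n) C) :
    sandwich π r (c • X) = c • sandwich π r X := by
  induction r with
  | zero => simp
  | tmul a b => simp [sandwich_tmul]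
  | add r₁ r₂ h₁ h₂ => simp [h₁, h₂]

/-- `tensorMatrix π p q (u ⊗ v) = π(u) E_{qp} π(v)`, i.e. its `(i, j)` entry is
`π(u)_{iq} π(v)_{pj}`. -/
noncomputable def tensorMatrix (p q : Fin n) : A ⊗[k] A →ₗ[k] Matrix (Fin n) (Fin n) C :=
  LinearMap.applyₗ (Matrix.single q p 1) ∘ₗ (sandwich π).toLinearMap ∘ₗ
    (tensorOpEquiv k A).toLinearMap

lemma tensorMatrix_apply (p q : Fin n) (u : A ⊗[k] A) :
    tensorMatrix π p q u = sandwich π (tensorOpEquiv k A u) (Matrix.single q p 1) := rfl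

lemma sandwich_tensorOpEquiv (u : A ⊗[k] A) (X : Matrix (Fin n) (Fin n) C) :
    sandwich π (tensorOpEquiv k A u) X = ∑ p, ∑ q, X q p • tensorMatrix π p q u := by
  conv_lhs => rw [Matrix.matrix_eq_sum_single X, Finset.sum_comm]
  simp only [map_sum, tensorMatrix_apply, ← sandwich_smul, Matrix.smul_single, smul_eq_mul,
    mul_one]

lemma sandwich_tmul_one_mul (a : A) (r : A ⊗[k] Aᵐᵒᵖ) (X : Matrix (Fin n) (Fin n) C) :
    sandwich π ((a ⊗ₜ op 1) * r) X = π a * sandwich π r X := by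
  rw [map_mul, Module.End.mul_apply, sandwich_tmul]
  simp

lemma sandwich_one_tmul_mul (b : Aᵐᵒᵖ) (r : A ⊗[k] Aᵐᵒᵖ) (X : Matrix (Fin n) (Fin n) C) :
    sandwich π ((1 ⊗ₜ b) * r) X = sandwich π r X * π (unop b) := by
  rw [map_mul, Module.End.mul_apply, sandwich_tmul]
  simp

lemma sandwich_tmul_single_apply (a : A) (b : Aᵐᵒᵖ) (p q i j : Fin n) :
    sandwich π (a ⊗ₜ b) (Matrix.single q p 1) i j = π a i q * π (unop b) p j := by
  simp [sandwich_tmul, Matrix.mul_apply, Matrix.single_apply, ite_and]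

lemma tensorMatrix_mul_of_mem_DDer {Θ : A →ₗ[k] A ⊗[k] A} (hΘ : Θ ∈ DDer k A) (p q : Fin n)
    (x y : A) :
    tensorMatrix π p q (Θ (x * y))
      = π x * tensorMatrix π p q (Θ y) + tensorMatrix π p q (Θ x) * π y := by
  simp only [tensorMatrix_apply, mem_DDer_iff_tensorOpEquiv.mp hΘ, map_add, LinearMap.add_apply,
    sandwich_tmul_one_mul, sandwich_one_tmul_mul, unop_op]

noncomputable def matrixDiff (D : Derivation k C C) :
    A ⊗[k] Aᵐᵒᵖ →ₗ[k] Matrix (Fin n) (Fin n) C :=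
  TensorProduct.lift (LinearMap.mk₂ k (fun u v => (π u).map D * π (unop v))
    (fun u₁ u₂ v => by simp [Matrix.map_add, add_mul])
    (fun c u v => by simp [Matrix.map_smul])
    (fun u v₁ v₂ => by simp [mul_add])
    (fun c u v => by simp))

lemma matrixDiff_tmul (D : Derivation k C C) (u : A) (v : Aᵐᵒᵖ) :
    matrixDiff π D (u ⊗ₜ v) = (π u).map D * π (unop v) := rfl

lemma matrixDiff_envDiff (D : Derivation k C C) (a : A) :
    matrixDiff π D (envDiff k A a) = (π a).map D := by
  simp [envDiff_apply, matrixDiff_tmul, D.map_matrix_one]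

lemma matrixDiff_mul (D : Derivation k C C) (r : A ⊗[k] Aᵐᵒᵖ) {ω : A ⊗[k] Aᵐᵒᵖ}
    (hω : ω ∈ LinearMap.ker (envMul k A)) :
    matrixDiff π D (r * ω) = sandwich π r (matrixDiff π D ω) := by
  refine map_mul_eq_of_mem_ker_envMul (sandwich π) _ (fun a c e => ?_) hω r
  rw [matrixDiff_envDiff, sandwich_tmul, envDiff_apply, mul_sub, map_sub]
  simp only [Algebra.TensorProduct.tmul_mul_tmul, mul_one, matrixDiff_tmul, unop_op,
    map_mul, D.map_matrix_mul, unop_mul, op_one]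
  noncomm_ring

lemma matrixDiff_add (D₁ D₂ : Derivation k C C) (r : A ⊗[k] Aᵐᵒᵖ) :
    matrixDiff π (D₁ + D₂) r = matrixDiff π D₁ r + matrixDiff π D₂ r := by
  induction r with
  | zero => simp
  | tmul u v =>
    simp only [matrixDiff_tmul, ← add_mul]
    congr 1
  | add r₁ r₂ h₁ h₂ => simp only [map_add, h₁, h₂]; abel

lemma matrixDiff_smul (c : C) (D : Derivation k C C) (r : A ⊗[k] Aᵐᵒᵖ) :
    matrixDiff π (c • D) r = c • matrixDiff π D r := by
  induction r with
  | zero => simp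
  | tmul u v =>
    simp only [matrixDiff_tmul, ← Matrix.smul_mul]
    congr 1
  | add r₁ r₂ h₁ h₂ => simp only [map_add, h₁, h₂, smul_add]

end Matrices

section DualNumbers

open TrivSqZeroExt

variable {k C : Type*} [CommRing k] [CommRing C] [Algebra k C]

noncomputable def Derivation.toDualNumberAlgHom (D : Derivation k C C) : C →ₐ[k] DualNumber C :=
  AlgHom.ofLinearMap
    { toFun x := inl x + inr (D x)
      map_add' x y := by ext <;> simp
      map_smul' c x := by ext <;> simp }
    (by ext <;> simp)
    (fun x y => by ext <;> simp [Derivation.leibniz, mul_comm])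

lemma Derivation.toDualNumberAlgHom_apply (D : Derivation k C C) (x : C) :
    D.toDualNumberAlgHom x = inl x + inr (D x) := rfl

noncomputable def Derivation.ofDualNumberAlgHom (ψ : C →ₐ[k] DualNumber C)
    (hψ : ∀ x, (ψ x).fst = x) : Derivation k C C where
  toLinearMap := (sndHom C C).restrictScalars k ∘ₗ ψ.toLinearMap
  map_one_eq_zero' := by simp
  leibniz' x y := by simp [hψ, mul_comm]

lemma Derivation.ofDualNumberAlgHom_apply (ψ : C →ₐ[k] DualNumber C) (hψ : ∀ x, (ψ x).fst = x)
    (x : C) : Derivation.ofDualNumberAlgHom ψ hψ x = (ψ x).snd := rfl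

variable {A : Type*} [Ring A] [Algebra k A] {n : ℕ}

noncomputable def AlgHom.addDualNumber (π : A →ₐ[k] Matrix (Fin n) (Fin n) C)
    (E : A →ₗ[k] Matrix (Fin n) (Fin n) C) (hE : ∀ x y, E (x * y) = π x * E y + E x * π y) :
    A →ₐ[k] Matrix (Fin n) (Fin n) (DualNumber C) :=
  AlgHom.ofLinearMap
    { toFun a := Matrix.of fun i j => inl (π a i j) + inr (E a i j)
      map_add' a b := by ext i j <;> simp
      map_smul' c a := by ext i j <;> simp }
    (by
      have hE1 : E 1 = 0 := by simpa using hE 1 1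
      ext i j <;> by_cases h : i = j <;> simp [Matrix.one_apply, h, hE1])
    (fun x y => by
      ext i j
      · simp [Matrix.mul_apply, fst_sum]
      · simp [Matrix.mul_apply, snd_sum, hE, Finset.sum_add_distrib, add_comm, mul_comm])

lemma AlgHom.addDualNumber_apply (π : A →ₐ[k] Matrix (Fin n) (Fin n) C)
    (E : A →ₗ[k] Matrix (Fin n) (Fin n) C) (hE : ∀ x y, E (x * y) = π x * E y + E x * π y)
    (a : A) (i j : Fin n) : π.addDualNumber E hE a i j = inl (π a i j) + inr (E a i j) := rfl

end DualNumbers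

section UniversalRepresentation

open TrivSqZeroExt

variable {k A : Type*} [CommRing k] [Ring A] [Algebra k A] {n : ℕ}
  {C : Type u} [CommRing C] [Algebra k C]

def IsUniversalRep (π : A →ₐ[k] Matrix (Fin n) (Fin n) C) : Prop :=
  ∀ (B : Type u) [CommRing B] [Algebra k B],
    Function.Bijective (fun φ : C →ₐ[k] B => (AlgHom.mapMatrix φ).comp π)

variable {π : A →ₐ[k] Matrix (Fin n) (Fin n) C}

lemma IsUniversalRep.algHom_ext (huniv : IsUniversalRep π) {B : Type u} [CommRing B]
    [Algebra k B] {φ₁ φ₂ : C →ₐ[k] B} (h : ∀ a i j, φ₁ (π a i j) = φ₂ (π a i j)) : φ₁ = φ₂ :=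
  (huniv B).1 <| AlgHom.ext fun a => Matrix.ext fun i j => h a i j

lemma IsUniversalRep.derivation_ext (huniv : IsUniversalRep π) {D₁ D₂ : Derivation k C C}
    (h : ∀ a i j, D₁ (π a i j) = D₂ (π a i j)) : D₁ = D₂ := by
  have h₁₂ := huniv.algHom_ext (φ₁ := D₁.toDualNumberAlgHom) (φ₂ := D₂.toDualNumberAlgHom)
    fun a i j => by simp [Derivation.toDualNumberAlgHom_apply, h a i j]
  ext x
  simpa [Derivation.toDualNumberAlgHom_apply] using congrArg (fun φ => (φ x).snd) h₁₂

lemma IsUniversalRep.exists_derivation (huniv : IsUniversalRep π)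
    (E : A →ₗ[k] Matrix (Fin n) (Fin n) C) (hE : ∀ x y, E (x * y) = π x * E y + E x * π y) :
    ∃ D : Derivation k C C, ∀ a i j, D (π a i j) = E a i j := by
  obtain ⟨ψ, hψ⟩ := (huniv (DualNumber C)).2 (π.addDualNumber E hE)
  have hentry : ∀ a i j, ψ (π a i j) = inl (π a i j) + inr (E a i j) := fun a i j => by
    rw [← AlgHom.addDualNumber_apply π E hE, ← hψ]
    rfl
  have hfst : (fstHom k C C).comp ψ = AlgHom.id k C :=
    huniv.algHom_ext fun a i j => by simp [hentry]
  refine ⟨Derivation.ofDualNumberAlgHom ψ fun x => by simpa using AlgHom.congr_fun hfst x,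
    fun a i j => ?_⟩
  simp [Derivation.ofDualNumberAlgHom_apply, hentry]

end UniversalRepresentation

section DerivationsOfDDer

variable {k A : Type*} [CommRing k] [Ring A] [Algebra k A] {n : ℕ}
  {C : Type u} [CommRing C] [Algebra k C] {π : A →ₐ[k] Matrix (Fin n) (Fin n) C}
  (huniv : IsUniversalRep π)

/-- The derivation `D_Θ^{pq}` of `C` with `D_Θ^{pq}(π(a)_{ij}) = π(Θ'(a))_{iq} π(Θ''(a))_{pj}`. -/
noncomputable def derivOfDDer (Θ : DDer k A) (p q : Fin n) : Derivation k C C :=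
  (huniv.exists_derivation (tensorMatrix π p q ∘ₗ (Θ : A →ₗ[k] A ⊗[k] A))
    (tensorMatrix_mul_of_mem_DDer π Θ.2 p q)).choose

lemma derivOfDDer_apply (Θ : DDer k A) (p q : Fin n) (a : A) (i j : Fin n) :
    derivOfDDer huniv Θ p q (π a i j) = tensorMatrix π p q ((Θ : A →ₗ[k] A ⊗[k] A) a) i j :=
  (huniv.exists_derivation (tensorMatrix π p q ∘ₗ (Θ : A →ₗ[k] A ⊗[k] A))
    (tensorMatrix_mul_of_mem_DDer π Θ.2 p q)).choose_spec a i j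

noncomputable def derivMatrixOfDDer : DDer k A →ₗ[k] Matrix (Fin n) (Fin n) (Derivation k C C) where
  toFun Θ := Matrix.of (derivOfDDer huniv Θ)
  map_add' Θ₁ Θ₂ := Matrix.ext fun p q => huniv.derivation_ext fun a i j => by
    simp [derivOfDDer_apply]
  map_smul' c Θ := Matrix.ext fun p q => huniv.derivation_ext fun a i j => by
    simp [derivOfDDer_apply]

lemma derivOfDDer_innerAct (Θ : DDer k A) (r : A ⊗[k] Aᵐᵒᵖ) (p q : Fin n) :
    derivOfDDer huniv (DDer.innerAct Θ r) p q
      = ∑ p', ∑ q', sandwich π r (Matrix.single q p 1) q' p' • derivOfDDer huniv Θ p' q' := by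
  refine huniv.derivation_ext fun a i j => ?_
  rw [derivOfDDer_apply, tensorMatrix_apply, DDer.tensorOpEquiv_innerAct_apply, map_mul,
    Module.End.mul_apply, sandwich_tensorOpEquiv]
  simp [Derivation.finset_sum_apply, Matrix.sum_apply, derivOfDDer_apply]

lemma matrixDiff_derivOfDDer (Θ : DDer k A) (p q : Fin n) (r : A ⊗[k] Aᵐᵒᵖ) :
    matrixDiff π (derivOfDDer huniv Θ p q) r
      = sandwich π (DDer.toEnv (Θ : A →ₗ[k] A ⊗[k] A) r) (Matrix.single q p 1) := by
  induction r with
  | zero => simp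
  | add r₁ r₂ h₁ h₂ => simp [h₁, h₂]
  | tmul u v =>
    rw [matrixDiff_tmul, DDer.toEnv_tmul, sandwich_one_tmul_mul, ← tensorMatrix_apply]
    congr 1
    ext i j
    exact derivOfDDer_apply huniv Θ p q u i j

lemma IsUniversalRep.eq_sum_derivOfDDer {m : ℕ} {ω : Fin m → LinearMap.ker (envMul k A)}
    {f : Fin m → LinearMap.ker (envMul k A) →ₗ[A ⊗[k] Aᵐᵒᵖ] A ⊗[k] Aᵐᵒᵖ}
    (hdual : ∀ x, ∑ s, f s x • ω s = x) (D : Derivation k C C) :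
    D = ∑ s, ∑ p, ∑ q,
      matrixDiff π D (ω s) q p • derivOfDDer huniv (DDer.ofDual (f s)) p q := by
  refine huniv.derivation_ext fun a i j => ?_
  have hD : D (π a i j) = matrixDiff π D (envDiff k A a) i j := by
    rw [matrixDiff_envDiff, Matrix.map_apply]
  rw [hD, envDiff_eq_sum_of_dual_basis hdual, map_sum]
  simp only [matrixDiff_mul π D _ (ω _).2, ← tensorOpEquiv_ofDual_apply,
    sandwich_tensorOpEquiv, Derivation.finset_sum_apply, Derivation.smul_apply,
    derivOfDDer_apply, Matrix.sum_apply, Matrix.smul_apply, smul_eq_mul]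

end DerivationsOfDDer

section VanDenBergh

variable {k : Type u} [Field k] {A : Type u} [Ring A] [Algebra k A] {n : ℕ}
  {C : Type u} [CommRing C] [Algebra k C] {π : A →ₐ[k] Matrix (Fin n) (Fin n) C}
  (huniv : IsUniversalRep π)

lemma isVdBHom_iff_map_innerAct {L : ModPkg k C}
    {F : DDer k A →ₗ[k] Matrix (Fin n) (Fin n) L.carrier} :
    IsVdBHom π L F ↔ ∀ Θ r p q, F (DDer.innerAct Θ r) p q
      = ∑ p', ∑ q', sandwich π r (Matrix.single q p 1) q' p' • F Θ p' q' := by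
  constructor
  · rintro ⟨hL, hR⟩ Θ r p q
    induction r with
    | zero => simp
    | add r₁ r₂ h₁ h₂ => simp [h₁, h₂, add_smul, Finset.sum_add_distrib]
    | tmul c e =>
      rw [← op_unop e, DDer.innerAct_tmul, hL, hR]
      simp only [matLSmul, matRSmul, Matrix.of_apply, Finset.smul_sum, smul_smul,
        sandwich_tmul_single_apply, unop_op]
      exact Finset.sum_congr rfl fun p' _ => Finset.sum_congr rfl fun q' _ => by rw [mul_comm]
  · intro h
    constructor
    · intro a Θ
      ext p q
      rw [← innerDR_one Θ, ← DDer.innerAct_tmul, h, innerDR_one]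
      simp [sandwich_tmul_single_apply, matLSmul, Matrix.one_apply]
    · intro b Θ
      ext p q
      rw [← innerDL_one (innerDR k A b Θ), ← DDer.innerAct_tmul, h]
      simp [sandwich_tmul_single_apply, matRSmul, Matrix.one_apply]

noncomputable def vdbHomOfLinear (L : ModPkg k C) (g : Derivation k C C →ₗ[C] L.carrier) :
    {F : DDer k A →ₗ[k] Matrix (Fin n) (Fin n) L.carrier // IsVdBHom π L F} :=
  ⟨(g.restrictScalars k).mapMatrix ∘ₗ derivMatrixOfDDer huniv,
    isVdBHom_iff_map_innerAct.mpr fun Θ r p q => by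
      simp [derivMatrixOfDDer, derivOfDDer_innerAct]⟩

lemma vdbHomOfLinear_apply (L : ModPkg k C) (g : Derivation k C C →ₗ[C] L.carrier)
    (Θ : DDer k A) (p q : Fin n) :
    (vdbHomOfLinear huniv L g).1 Θ p q = g (derivOfDDer huniv Θ p q) := rfl

variable {m : ℕ} {ω : Fin m → LinearMap.ker (envMul k A)}
  {f : Fin m → LinearMap.ker (envMul k A) →ₗ[A ⊗[k] Aᵐᵒᵖ] A ⊗[k] Aᵐᵒᵖ}

variable (ω f) in
noncomputable def linearOfVdBHom (L : ModPkg k C)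
    (F : {F : DDer k A →ₗ[k] Matrix (Fin n) (Fin n) L.carrier // IsVdBHom π L F}) :
    Derivation k C C →ₗ[C] L.carrier where
  toFun D := ∑ s, ∑ p, ∑ q, matrixDiff π D (ω s) q p • F.1 (DDer.ofDual (f s)) p q
  map_add' D₁ D₂ := by
    simp only [matrixDiff_add, Matrix.add_apply, add_smul, Finset.sum_add_distrib]
  map_smul' c D := by
    simp only [matrixDiff_smul, Matrix.smul_apply, smul_eq_mul, mul_smul, Finset.smul_sum,
      RingHom.id_apply]

lemma linearOfVdBHom_pushVdB {L L' : ModPkg k C} (h : L.carrier →ₗ[C] L'.carrier)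
    (F : {F : DDer k A →ₗ[k] Matrix (Fin n) (Fin n) L.carrier // IsVdBHom π L F}) :
    linearOfVdBHom ω f L' (pushVdB π h F) = h ∘ₗ linearOfVdBHom ω f L F := by
  ext D
  simp [linearOfVdBHom, pushVdB]

lemma vdbHomOfLinear_linearOfVdBHom (hdual : ∀ x, ∑ s, f s x • ω s = x) (L : ModPkg k C)
    (F : {F : DDer k A →ₗ[k] Matrix (Fin n) (Fin n) L.carrier // IsVdBHom π L F}) :
    vdbHomOfLinear huniv L (linearOfVdBHom ω f L F) = F := by
  refine Subtype.ext <| LinearMap.ext fun Θ => Matrix.ext fun p q => ?_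
  rw [vdbHomOfLinear_apply]
  conv_rhs => rw [DDer.eq_sum_innerAct hdual Θ, map_sum, Matrix.sum_apply]
  simp only [linearOfVdBHom, LinearMap.coe_mk, AddHom.coe_mk, matrixDiff_derivOfDDer,
    isVdBHom_iff_map_innerAct.mp F.2]

lemma vdbHomOfLinear_injective (hdual : ∀ x, ∑ s, f s x • ω s = x) (L : ModPkg k C) :
    Function.Injective (vdbHomOfLinear (A := A) huniv L) := by
  intro g₁ g₂ h
  have h' : ∀ Θ p q, g₁ (derivOfDDer huniv Θ p q) = g₂ (derivOfDDer huniv Θ p q) :=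
    fun Θ p q => congrArg (fun F => F.1 Θ p q) h
  ext D
  rw [huniv.eq_sum_derivOfDDer hdual D]
  simp [h']

noncomputable def vdbEquiv (hdual : ∀ x, ∑ s, f s x • ω s = x) (L : ModPkg k C) :
    {F : DDer k A →ₗ[k] Matrix (Fin n) (Fin n) L.carrier // IsVdBHom π L F} ≃
      (Derivation k C C →ₗ[C] L.carrier) where
  toFun := linearOfVdBHom ω f L
  invFun := vdbHomOfLinear huniv L
  left_inv := vdbHomOfLinear_linearOfVdBHom huniv hdual L
  right_inv _ := vdbHomOfLinear_injective huniv hdual L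
    (vdbHomOfLinear_linearOfVdBHom huniv hdual L _)

end VanDenBergh

theorem double_derivations_KR_principle_general
    (k : Type u) [Field k] (A : Type u) [Ring A] [Algebra k A]
    -- `A` is smooth over `k`:
    [Algebra.FiniteType k A]
    (hsmooth : Module.Projective (A ⊗[k] Aᵐᵒᵖ)
      (LinearMap.ker (envMul k A)))
    (n : ℕ)
    (AV : Type u) [CommRing AV] [Algebra k AV]
    (π : A →ₐ[k] Matrix (Fin n) (Fin n) AV)
    -- `(AV, π)` is a universal n-dimensional representation of `A`:
    (huniv : ∀ (B : Type u) [CommRing B] [Algebra k B],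
      Function.Bijective (fun φ : AV →ₐ[k] B => (AlgHom.mapMatrix φ).comp π)) :
    ∃ Ψ : (L : ModPkg k AV) →
        {F : DDer k A →ₗ[k] Matrix (Fin n) (Fin n) L.carrier // IsVdBHom π L F} →
        (Derivation k AV AV →ₗ[AV] L.carrier),
      (∀ L : ModPkg k AV, Function.Bijective (Ψ L)) ∧
      (∀ (L L' : ModPkg k AV) (h : L.carrier →ₗ[AV] L'.carrier)
          (F : {F : DDer k A →ₗ[k] Matrix (Fin n) (Fin n) L.carrier // IsVdBHom π L F}),
        Ψ L' (pushVdB π h F) = h ∘ₗ Ψ L F) := by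
  obtain ⟨m, ω, f, hdual⟩ := Module.Projective.exists_dual_basis (A ⊗[k] Aᵐᵒᵖ)
    (LinearMap.ker (envMul k A))
  exact ⟨fun L => vdbEquiv huniv hdual L, fun L => (vdbEquiv huniv hdual L).bijective,
    fun L L' h F => linearOfVdBHom_pushVdB h F⟩

/-- The Kontsevich–Rosenberg principle for double derivations, via the Van den Bergh
functor: for smooth `A`, `(𝔻er A)_V ≅ Der(A_V)`, expressed as a family of bijections
between `A`-bimodule maps `𝔻er A → Mat_n(L)` and `A_V`-linear maps `Der_k(A_V) → L`,
natural in the `A_V`-module `L`. -/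
theorem double_derivations_KR_principle
    (k : Type u) [Field k] (A : Type u) [Ring A] [Algebra k A]
    -- `A` is smooth over `k`:
    [Algebra.FiniteType k A]
    (hsmooth : Module.Projective (A ⊗[k] Aᵐᵒᵖ)
      (LinearMap.ker (envMul k A)))
    (n : ℕ) (hn : 1 ≤ n)
    (AV : Type u) [CommRing AV] [Algebra k AV]
    (π : A →ₐ[k] Matrix (Fin n) (Fin n) AV)
    -- `(AV, π)` is a universal n-dimensional representation of `A`:
    (huniv : ∀ (B : Type u) [CommRing B] [Algebra k B],
      Function.Bijective (fun φ : AV →ₐ[k] B => (AlgHom.mapMatrix φ).comp π)) :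
    ∃ Ψ : (L : ModPkg k AV) →
        {F : DDer k A →ₗ[k] Matrix (Fin n) (Fin n) L.carrier // IsVdBHom π L F} →
        (Derivation k AV AV →ₗ[AV] L.carrier),
      (∀ L : ModPkg k AV, Function.Bijective (Ψ L)) ∧
      (∀ (L L' : ModPkg k AV) (h : L.carrier →ₗ[AV] L'.carrier)
          (F : {F : DDer k A →ₗ[k] Matrix (Fin n) (Fin n) L.carrier // IsVdBHom π L F}),
        Ψ L' (pushVdB π h F) = h ∘ₗ Ψ L F) :=
  double_derivations_KR_principle_general k A hsmooth n AV π huniv
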